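/- arXiv:2011.06046 — 3 statements merged into one kernel-verified Lean document; each statement's English description precedes it below -/
import Mathlib

section
/- Let G = (X ∪ Y, E) be a finite bipartite graph with a fixed preference instance. Some stable matching is X-saturating if and only if every stable matching is X-saturating. -/
open SimpleGraph Finset

/-- A preference instance: each vertex ranks its neighbors injectively
(lower rank = more preferred). This encodes a strict linear order over neighbors. -/
def IsPrefInstance {V : Type*} (G : SimpleGraph V) (rank : V → V → ℕ) : Prop :=
  ∀ v : V, Set.InjOn (rank v) (G.neighborSet v)

/-- A vertex is matched in a subgraph if it has a partner. -/
def Matched {V : Type*} {G : SimpleGraph V} (M : G.Subgraph) (v : V) : Prop :=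
  ∃ w, M.Adj v w

/-- `M` is a stable matching: it is a matching of `G` and there is no blocking pair,
i.e. no edge `xy` of `G` not in `M` such that `x` is unmatched or prefers `y` to its
partner, and `y` is unmatched or prefers `x` to its partner. -/
def IsStableMatching {V : Type*} {G : SimpleGraph V} (rank : V → V → ℕ) (M : G.Subgraph) :
    Prop :=
  M.IsMatching ∧
    ¬ ∃ x y, G.Adj x y ∧ ¬ M.Adj x y ∧
      (∀ w, M.Adj x w → rank x y < rank x w) ∧
      (∀ w, M.Adj y w → rank y x < rank y w)

/-- `G` is bipartite with parts `X` and `Y`. -/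
def IsBipartiteWith {V : Type*} (G : SimpleGraph V) (X Y : Finset V) : Prop :=
  Disjoint X Y ∧ (∀ v : V, v ∈ X ∨ v ∈ Y) ∧
    ∀ ⦃a b : V⦄, G.Adj a b → (a ∈ X ∧ b ∈ Y) ∨ (a ∈ Y ∧ b ∈ X)

/-- The second neighborhood `N(N(x))`. -/
def NN {V : Type*} (G : SimpleGraph V) [Fintype V] [DecidableEq V] [DecidableRel G.Adj]
    (x : V) : Finset V :=
  (G.neighborFinset x).biUnion fun y => G.neighborFinset y

/-! Stable matchings exist by deferred acceptance, with `X` proposing: a maximal set of rejected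
pairs, each rejection justified by a better current proposal, leaves every vertex of `Y` with at
most one proposal, and these proposals form a stable matching.

Conversely, every stable matching matches the same vertices. If `x` is matched in `M` but not in
`M'`, stability forces the `M'`-partner of its `M`-partner to prefer `M` to `M'` as well; this
step is injective on the finite set of `M`-edges whose first vertex prefers `M` to `M'`, hence
onto, yet the edge at `x` is not in its image. -/

theorem IsPrefInstance.rank_lt_of_le {V : Type*} {G : SimpleGraph V} {rank : V → V → ℕ}
    (hP : IsPrefInstance G rank) {v a b : V} (ha : G.Adj v a) (hb : G.Adj v b) (hab : a ≠ b)
    (h : rank v a ≤ rank v b) : rank v a < rank v b :=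
  h.lt_of_ne fun h => hab (hP v ha hb h)

theorem IsBipartiteWith.mem_iff_notMem_of_adj {V : Type*} {G : SimpleGraph V} {X Y : Finset V}
    (hBip : _root_.IsBipartiteWith G X Y) {a b : V} (hab : G.Adj a b) : a ∈ X ↔ b ∉ X := by
  rcases hBip.2.2 hab with ⟨ha, hb⟩ | ⟨ha, hb⟩
  · exact iff_of_true ha (Finset.disjoint_right.1 hBip.1 hb)
  · exact iff_of_false (Finset.disjoint_right.1 hBip.1 ha) (not_not.2 hb)

namespace IsStableMatching

variable {V : Type*} {G : SimpleGraph V} {rank : V → V → ℕ} {M M' : G.Subgraph}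

theorem exists_adj_rank_le (hM : IsStableMatching rank M) {x y : V} (hxy : G.Adj x y)
    (hnot : ¬ M.Adj x y) (hx : ∀ w, M.Adj x w → rank x y < rank x w) :
    ∃ w, M.Adj y w ∧ rank y w ≤ rank y x := by
  by_contra! h
  exact hM.2 ⟨x, y, hxy, hnot, hx, h⟩

-- Otherwise `xy` would block `M'`, or `yx'` would block `M`.
theorem exists_next_of_prefers (hP : IsPrefInstance G rank) (hM : IsStableMatching rank M)
    (hM' : IsStableMatching rank M') {x y : V} (hxy : M.Adj x y)
    (hx : ∀ w, M'.Adj x w → rank x y < rank x w) :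
    ∃ x' y', M'.Adj y x' ∧ M.Adj x' y' ∧ ∀ w, M'.Adj x' w → rank x' y' < rank x' w := by
  have hxy' : ¬ M'.Adj x y := fun h => (hx y h).false
  obtain ⟨x', hyx', hle⟩ := hM'.exists_adj_rank_le (M.adj_sub hxy) hxy' hx
  have hx'x : x' ≠ x := by
    rintro rfl
    exact hxy' hyx'.symm
  have hlt : rank y x' < rank y x :=
    hP.rank_lt_of_le (M'.adj_sub hyx') (M.adj_sub hxy.symm) hx'x hle
  have hyx'M : ¬ M.Adj y x' := fun h => hx'x (hM.1.eq_of_adj_left h hxy.symm)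
  obtain ⟨y', hx'y', hle'⟩ := hM.exists_adj_rank_le (M'.adj_sub hyx') hyx'M
    fun w hw => hM.1.eq_of_adj_left hw hxy.symm ▸ hlt
  have hy'y : y' ≠ y := by
    rintro rfl
    exact hyx'M hx'y'.symm
  refine ⟨x', y', hyx', hx'y', fun w hw => ?_⟩
  rw [hM'.1.eq_of_adj_left hw hyx'.symm]
  exact hP.rank_lt_of_le (M.adj_sub hx'y') (M'.adj_sub hyx'.symm) hy'y hle'

theorem matched_of_matched [Finite V] (hP : IsPrefInstance G rank)
    (hM : IsStableMatching rank M) (hM' : IsStableMatching rank M') {x : V}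
    (hx : Matched M x) : Matched M' x := by
  by_contra hx'
  obtain ⟨y, hxy⟩ := hx
  let S := {e : V × V // M.Adj e.1 e.2 ∧ ∀ w, M'.Adj e.1 w → rank e.1 e.2 < rank e.1 w}
  have step : ∀ e : S, ∃ f : S, M'.Adj e.1.2 f.1.1 := fun ⟨_, hab, ha⟩ =>
    let ⟨x', y', hyx', hx'y', hx'⟩ := exists_next_of_prefers hP hM hM' hab ha
    ⟨⟨(x', y'), hx'y', hx'⟩, hyx'⟩
  choose f hf using step
  -- `f` is injective, so it is onto the finite set `S`; but `(x, y) ∈ S` has no `M'`-partner.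
  have hinj : Function.Injective f := by
    intro e₁ e₂ h
    have h₂ : e₁.1.2 = e₂.1.2 := hM'.1.eq_of_adj_right (hf e₁) (h ▸ hf e₂)
    have h₁ : e₁.1.1 = e₂.1.1 := hM.1.eq_of_adj_right e₁.2.1 (h₂ ▸ e₂.2.1)
    exact Subtype.ext (Prod.ext h₁ h₂)
  obtain ⟨e, he⟩ := Finite.injective_iff_surjective.1 hinj
    ⟨(x, y), hxy, fun w hw => (hx' ⟨w, hw⟩).elim⟩
  exact hx' ⟨_, (he ▸ hf e).symm⟩

end IsStableMatching

namespace DeferredAcceptance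

variable {V : Type*} (G : SimpleGraph V) (X : Set V) (rank : V → V → ℕ)

/-- `R` is the set of rejected pairs: `x ∈ X` proposes to its favourite neighbour that has not
rejected it. -/
def Proposes (R : Set (V × V)) (x y : V) : Prop :=
  x ∈ X ∧ G.Adj x y ∧ (x, y) ∉ R ∧ ∀ z, G.Adj x z → (x, z) ∉ R → rank x y ≤ rank x z

def Justified (R : Set (V × V)) : Prop :=
  ∀ p ∈ R, ∃ x, Proposes G X rank R x p.2 ∧ rank p.2 x < rank p.2 p.1

def proposalSubgraph (R : Set (V × V)) : G.Subgraph where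
  verts := {v | ∃ w, Proposes G X rank R v w ∨ Proposes G X rank R w v}
  Adj a b := Proposes G X rank R a b ∨ Proposes G X rank R b a
  adj_sub := by
    rintro a b (h | h)
    exacts [h.2.1, h.2.1.symm]
  edge_vert h := ⟨_, h⟩
  symm := ⟨fun _ _ => Or.symm⟩

variable {G X rank} {R : Set (V × V)}

theorem Proposes.mono {R' : Set (V × V)} {x y : V} (h : Proposes G X rank R x y)
    (hRR' : R ⊆ R') (hxy : (x, y) ∉ R') : Proposes G X rank R' x y :=
  ⟨h.1, h.2.1, hxy, fun z hz hzR => h.2.2.2 z hz fun h' => hzR (hRR' h')⟩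

theorem Proposes.eq_of_proposes (hP : IsPrefInstance G rank) {x y₁ y₂ : V}
    (h₁ : Proposes G X rank R x y₁) (h₂ : Proposes G X rank R x y₂) : y₁ = y₂ :=
  hP x h₁.2.1 h₂.2.1 <|
    (h₁.2.2.2 _ h₂.2.1 h₂.2.2.1).antisymm (h₂.2.2.2 _ h₁.2.1 h₁.2.2.1)

theorem exists_proposes [Finite V] {x y : V} (hx : x ∈ X) (hxy : G.Adj x y) (hR : (x, y) ∉ R) :
    ∃ y', Proposes G X rank R x y' ∧ rank x y' ≤ rank x y := by
  obtain ⟨y', ⟨hxy', hR'⟩, hmin⟩ := Set.exists_min_image {z | G.Adj x z ∧ (x, z) ∉ R}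
    (rank x) (Set.toFinite _) ⟨y, hxy, hR⟩
  exact ⟨y', ⟨hx, hxy', hR', fun z hz hzR => hmin z ⟨hz, hzR⟩⟩, hmin y ⟨hxy, hR⟩⟩

-- A rejection justified by `x`'s proposal to `y` is now justified by the better one of `x'`.
theorem Justified.insert_of_proposes (hR : Justified G X rank R) {x x' y : V}
    (hx : Proposes G X rank R x y) (hx' : Proposes G X rank R x' y) (hlt : rank y x' < rank y x) :
    Justified G X rank (insert (x, y) R) := by
  have hsub : R ⊆ insert (x, y) R := Set.subset_insert _ _
  have hx'new : Proposes G X rank (insert (x, y) R) x' y := by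
    refine hx'.mono hsub fun h => ?_
    rcases h with h | h
    · exact hlt.ne (by rw [(Prod.mk.inj h).1])
    · exact hx'.2.2.1 h
  rintro ⟨a, b⟩ (hab | hab)
  · obtain ⟨rfl, rfl⟩ := Prod.mk.inj hab
    exact ⟨x', hx'new, hlt⟩
  · obtain ⟨w, hw, hwlt⟩ := hR _ hab
    by_cases hwb : (w, b) = (x, y)
    · obtain ⟨rfl, rfl⟩ := Prod.mk.inj hwb
      exact ⟨x', hx'new, hlt.trans hwlt⟩
    · refine ⟨w, hw.mono hsub fun h => ?_, hwlt⟩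
      rcases h with h | h
      exacts [hwb h, hw.2.2.1 h]

-- Take a maximal justified set of rejections.
theorem exists_justified_forall_le [Finite V] :
    ∃ R, Justified G X rank R ∧
      ∀ x x' y, Proposes G X rank R x y → Proposes G X rank R x' y → rank y x ≤ rank y x' := by
  obtain ⟨R, hR, hmax⟩ := (Set.toFinite {R : Set (V × V) | Justified G X rank R}).exists_maximal
    ⟨∅, fun _ h => h.elim⟩
  refine ⟨R, hR, fun x x' y hx hx' => not_lt.1 fun hlt => hx.2.2.1 ?_⟩
  exact hmax (hR.insert_of_proposes hx hx' hlt) (Set.subset_insert _ _) (Set.mem_insert _ _)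

variable (hX : ∀ ⦃a b⦄, G.Adj a b → (a ∈ X ↔ b ∉ X)) (hP : IsPrefInstance G rank)
  (hR : ∀ x x' y, Proposes G X rank R x y → Proposes G X rank R x' y → rank y x ≤ rank y x')
include hX hP hR

theorem isMatching_proposalSubgraph : (proposalSubgraph G X rank R).IsMatching := by
  rintro v ⟨w, hw⟩
  refine ⟨w, hw, fun u hu => ?_⟩
  rcases hw with hw | hw <;> rcases hu with hu | hu
  · exact hu.eq_of_proposes hP hw
  · exact ((hX hu.2.1).1 hu.1 hw.1).elim
  · exact ((hX hw.2.1).1 hw.1 hu.1).elim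
  · exact hP v hu.2.1.symm hw.2.1.symm ((hR _ _ _ hu hw).antisymm (hR _ _ _ hw hu))

theorem isStableMatching_proposalSubgraph [Finite V] (hRj : Justified G X rank R) :
    IsStableMatching rank (proposalSubgraph G X rank R) := by
  refine ⟨isMatching_proposalSubgraph hX hP hR, ?_⟩
  rintro ⟨a, b, hab, -, ha, hb⟩
  wlog haX : a ∈ X generalizing a b
  · exact this b a hab.symm hb ha (not_not.1 (mt (hX hab).2 haX))
  by_cases hrej : (a, b) ∈ R
  · obtain ⟨x, hx, hlt⟩ := hRj _ hrej
    exact (hb x (Or.inr hx)).not_gt hlt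
  · obtain ⟨y, hy, hle⟩ := exists_proposes haX hab hrej
    exact (ha y (Or.inl hy)).not_ge hle

end DeferredAcceptance

theorem exists_isStableMatching {V : Type*} [Finite V] {G : SimpleGraph V} {X : Set V}
    {rank : V → V → ℕ} (hX : ∀ ⦃a b⦄, G.Adj a b → (a ∈ X ↔ b ∉ X))
    (hP : IsPrefInstance G rank) : ∃ M : G.Subgraph, IsStableMatching rank M := by
  obtain ⟨R, hRj, hR⟩ :=
    DeferredAcceptance.exists_justified_forall_le (G := G) (X := X) (rank := rank)
  exact ⟨_, DeferredAcceptance.isStableMatching_proposalSubgraph hX hP hR hRj⟩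

theorem stmt_5_general {V : Type*} [Fintype V] (G : SimpleGraph V)
    (X Y : Finset V) (hBip : _root_.IsBipartiteWith G X Y)
    (rank : V → V → ℕ) (hP : IsPrefInstance G rank) :
    (∃ M : G.Subgraph, IsStableMatching rank M ∧ ∀ x ∈ X, Matched M x) ↔
      ∀ M : G.Subgraph, IsStableMatching rank M → ∀ x ∈ X, Matched M x := by
  refine ⟨fun ⟨M₀, hM₀, hsat⟩ M hM x hx => hM₀.matched_of_matched hP hM (hsat x hx), fun h => ?_⟩
  obtain ⟨M, hM⟩ := exists_isStableMatching (X := (X : Set V))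
    (fun _ _ hab => hBip.mem_iff_notMem_of_adj hab) hP
  exact ⟨M, hM, h M hM⟩

theorem stmt_5 {V : Type*} [Fintype V] [DecidableEq V] (G : SimpleGraph V)
    [DecidableRel G.Adj] (X Y : Finset V) (hBip : _root_.IsBipartiteWith G X Y)
    (rank : V → V → ℕ) (hP : IsPrefInstance G rank) :
    (∃ M : G.Subgraph, IsStableMatching rank M ∧ ∀ x ∈ X, Matched M x) ↔
      ∀ M : G.Subgraph, IsStableMatching rank M → ∀ x ∈ X, Matched M x :=
  stmt_5_general G X Y hBip rank hP
end

section
/- Let G = (X ∪ Y, E) be a finite connected bipartite graph with |X| = |Y| = n ≥ 1. Then every stable matching is perfect for every preference instance if and only if G is the complete bipartite graph K_{n,n}. -/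
open SimpleGraph Finset

/-!
If `G` is complete bipartite and `v ∈ X` is left unmatched by a stable matching, then, since a
matching pairs matched vertices of `X` and `Y` bijectively and `|X| = |Y|`, some `w ∈ Y` is
unmatched too, and `vw` is a blocking pair (symmetrically for `v ∈ Y`).

Conversely, when every vertex ranks its partner first, every maximal matching is stable, so it
suffices to find a maximal matching that is not perfect. If `a ∈ X`, `b ∈ Y` are nonadjacent,
walking from `a` to `b` (alternately through `Y` and `X`) one finds such a pair joined by a
path `a - y - x - b`. Extend `{ay, xb}` to a maximal matching; if it is perfect, replacing `ay, xb` by `xy` leaves exactly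
`a` and `b` unmatched, and since they are nonadjacent the new matching is still maximal.
-/

theorem IsBipartiteWith.symm {V : Type*} {G : SimpleGraph V} {X Y : Finset V}
    (h : _root_.IsBipartiteWith G X Y) : _root_.IsBipartiteWith G Y X :=
  ⟨h.1.symm, fun v => (h.2.1 v).symm, fun _ _ hab => (h.2.2 hab).symm⟩

theorem IsBipartiteWith.mem_right_of_adj {V : Type*} {G : SimpleGraph V} {X Y : Finset V}
    (h : _root_.IsBipartiteWith G X Y) {a b : V} (ha : a ∈ X) (hab : G.Adj a b) : b ∈ Y :=
  (h.2.2 hab).elim And.right fun h' => absurd ha (Finset.disjoint_right.1 h.1 h'.1)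

theorem IsBipartiteWith.exists_adj_adj_adj_not_adj {V : Type*} {G : SimpleGraph V}
    {X Y : Finset V} (h : _root_.IsBipartiteWith G X Y) :
    ∀ {a b : V}, G.Walk a b → a ∈ X → b ∈ Y → ¬ G.Adj a b →
      ∃ a' y x b', G.Adj a' y ∧ G.Adj y x ∧ G.Adj x b' ∧ ¬ G.Adj a' b' ∧ a' ∈ X ∧ b' ∈ Y
  | _, _, .nil, ha, hb, _ => absurd hb (Finset.disjoint_left.1 h.1 ha)
  | _, _, .cons hap .nil, _, _, hab => absurd hap hab
  | a, b, .cons (v := p) hap (.cons (v := q) hpq W), ha, hb, hab => by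
    by_cases hqb : G.Adj q b
    · exact ⟨a, p, q, b, hap, hpq, hqb, hab, ha, hb⟩
    · have hq : q ∈ X := h.symm.mem_right_of_adj (h.mem_right_of_adj ha hap) hpq
      exact h.exists_adj_adj_adj_not_adj W hq hb hqb

/-- A matching is maximal (under inclusion) iff it covers an endpoint of every edge. -/
def IsMaximalMatching {V : Type*} {G : SimpleGraph V} (M : G.Subgraph) : Prop :=
  M.IsMatching ∧ ∀ ⦃u v⦄, G.Adj u v → Matched M u ∨ Matched M v

namespace SimpleGraph.Subgraph

variable {V : Type*} {G : SimpleGraph V} {M : G.Subgraph}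

theorem IsMatching.deleteVerts (hM : M.IsMatching) {s : Set V}
    (hs : ∀ v ∈ s, ∀ w, M.Adj v w → w ∈ s) : (M.deleteVerts s).IsMatching := by
  rintro v ⟨hvM, hvs⟩
  obtain ⟨w, hvw, huniq⟩ := hM hvM
  have hws : w ∉ s := fun hws => hvs (hs w hws v hvw.symm)
  refine ⟨w, deleteVerts_adj.2 ⟨hvM, hvs, M.edge_vert hvw.symm, hws, hvw⟩, fun w' hw' => ?_⟩
  exact huniq w' (deleteVerts_adj.1 hw').2.2.2.2

theorem exists_isMaximalMatching_ge [Finite V] {M₀ : G.Subgraph} (hM₀ : M₀.IsMatching) :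
    ∃ M, M₀ ≤ M ∧ IsMaximalMatching M := by
  obtain ⟨M, hM₀M, hmax⟩ := Finite.exists_le_maximal hM₀
  refine ⟨M, hM₀M, hmax.prop, fun u v huv => ?_⟩
  by_contra! hfree
  have hsup : (M ⊔ G.subgraphOfAdj huv).IsMatching := by
    refine hmax.prop.sup (.subgraphOfAdj huv) ?_
    rw [support_subgraphOfAdj, Set.disjoint_insert_right, Set.disjoint_singleton_right]
    exact ⟨hfree.1, hfree.2⟩
  have hle : G.subgraphOfAdj huv ≤ M := le_sup_right.trans (hmax.2 hsup le_sup_left)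
  exact hfree.1 ⟨v, hle.2 (subgraphOfAdj_adj_self huv)⟩

theorem IsMatching.exists_isMatching_exposing_ends (hM : M.IsMatching) {a y x b : V}
    (hay : M.Adj a y) (hxb : M.Adj x b) (hxy : G.Adj x y) (hax : a ≠ x) :
    ∃ M' : G.Subgraph, M'.IsMatching ∧ ∀ v, Matched M' v ↔ Matched M v ∧ v ≠ a ∧ v ≠ b := by
  have hby : b ≠ y := fun h => hax (hM.eq_of_adj_right hay (h ▸ hxb))
  have hay' : a ≠ y := hay.ne
  have hxb' : x ≠ b := hxb.ne
  set s : Set V := {a, y, x, b}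
  have hs : ∀ v ∈ s, ∀ w, M.Adj v w → w ∈ s := by
    rintro v (rfl | rfl | rfl | rfl) w hvw
    · simp [s, hM.eq_of_adj_left hvw hay]
    · simp [s, hM.eq_of_adj_left hvw hay.symm]
    · simp [s, hM.eq_of_adj_left hvw hxb]
    · simp [s, hM.eq_of_adj_left hvw hxb.symm]
  refine ⟨M.deleteVerts s ⊔ G.subgraphOfAdj hxy, ?_, fun v => ?_⟩
  · refine (hM.deleteVerts hs).sup (.subgraphOfAdj hxy) ?_
    rw [support_subgraphOfAdj, Set.disjoint_insert_right, Set.disjoint_singleton_right]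
    exact ⟨fun ⟨w, hw⟩ => (deleteVerts_adj.1 hw).2.1 (by simp [s]),
      fun ⟨w, hw⟩ => (deleteVerts_adj.1 hw).2.1 (by simp [s])⟩
  · constructor
    · rintro ⟨w, hvw | hvw⟩
      · obtain ⟨-, hvs, -, -, hvw⟩ := deleteVerts_adj.1 hvw
        simp only [s, Set.mem_insert_iff, Set.mem_singleton_iff, not_or] at hvs
        exact ⟨⟨w, hvw⟩, hvs.1, hvs.2.2.2⟩
      · rw [subgraphOfAdj_adj, Sym2.eq_iff] at hvw
        rcases hvw with ⟨rfl, -⟩ | ⟨-, rfl⟩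
        · exact ⟨⟨b, hxb⟩, hax.symm, hxb'⟩
        · exact ⟨⟨a, hay.symm⟩, hay'.symm, hby.symm⟩
    · rintro ⟨⟨w, hvw⟩, hva, hvb⟩
      by_cases hv : v ∈ s
      · simp only [s, Set.mem_insert_iff, Set.mem_singleton_iff] at hv
        rcases hv with rfl | rfl | rfl | rfl
        · exact absurd rfl hva
        · exact ⟨x, Or.inr (by simp [subgraphOfAdj_adj, Sym2.eq_swap])⟩
        · exact ⟨y, Or.inr (by simp [subgraphOfAdj_adj])⟩
        · exact absurd rfl hvb
      · have hw : w ∉ s := fun hw => hv (hs w hw v hvw.symm)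
        exact ⟨w, Or.inl (deleteVerts_adj.2 ⟨M.edge_vert hvw, hv, M.edge_vert hvw.symm, hw, hvw⟩)⟩

end SimpleGraph.Subgraph

theorem IsStableMatching.matched_or_matched {V : Type*} {G : SimpleGraph V}
    {rank : V → V → ℕ} {M : G.Subgraph} (hM : IsStableMatching rank M) {u v : V}
    (huv : G.Adj u v) : Matched M u ∨ Matched M v := by
  by_contra! hfree
  exact hM.2 ⟨u, v, huv, fun h => hfree.1 ⟨v, h⟩, fun w h => absurd ⟨w, h⟩ hfree.1,
    fun w h => absurd ⟨w, h⟩ hfree.2⟩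

theorem IsMaximalMatching.exists_isStableMatching {V : Type*} [Countable V]
    {G : SimpleGraph V} {M : G.Subgraph} (hM : IsMaximalMatching M) :
    ∃ rank, IsPrefInstance G rank ∧ IsStableMatching rank M := by
  classical
  obtain ⟨ι, hι⟩ := Countable.exists_injective_nat V
  refine ⟨fun v w => if M.Adj v w then 0 else ι w + 1, fun v w₁ _ w₂ _ h => ?_, hM.1, ?_⟩
  · dsimp only at h
    split_ifs at h with h₁ h₂ h₂
    · exact hM.1.eq_of_adj_left h₁ h₂
    · exact hι (Nat.succ_injective h)
  · rintro ⟨x, y, hxy, -, hx, hy⟩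
    have unmatched : ∀ {u v}, (∀ w, M.Adj u w → (if M.Adj u v then 0 else ι v + 1) <
        if M.Adj u w then 0 else ι w + 1) → ¬ Matched M u := by
      rintro u v h ⟨w, huw⟩
      simpa [huw] using h w huw
    exact (hM.2 hxy).elim (unmatched hx) (unmatched hy)

theorem IsBipartiteWith.subset_verts_of_subset_verts {V : Type*} {G : SimpleGraph V}
    {X Y : Finset V} (h : _root_.IsBipartiteWith G X Y) (hcard : X.card ≤ Y.card)
    {M : G.Subgraph} (hM : M.IsMatching) (hY : ↑Y ⊆ M.verts) : ↑X ⊆ M.verts := by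
  classical
  have hYX : Y.card ≤ (X.filter (· ∈ M.verts)).card := by
    refine Finset.card_le_card_of_forall_subsingleton M.Adj (fun y hy => ?_)
      fun x _ y₁ hy₁ y₂ hy₂ => hM.eq_of_adj_right hy₁.2 hy₂.2
    obtain ⟨x, hyx, -⟩ := hM (hY hy)
    exact ⟨x, Finset.mem_filter.2 ⟨h.symm.mem_right_of_adj hy (M.adj_sub hyx),
      M.edge_vert hyx.symm⟩, hyx⟩
  have hfilter := Finset.eq_of_subset_of_card_le (Finset.filter_subset _ X) (hcard.trans hYX)
  intro x hx
  rw [Finset.mem_coe, ← hfilter, Finset.mem_filter] at hx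
  exact hx.2

theorem IsBipartiteWith.matched_of_isStableMatching {V : Type*} {G : SimpleGraph V}
    {X Y : Finset V} (h : _root_.IsBipartiteWith G X Y) (hcard : X.card = Y.card)
    (hcomplete : ∀ a ∈ X, ∀ b ∈ Y, G.Adj a b) {rank : V → V → ℕ} {M : G.Subgraph}
    (hM : IsStableMatching rank M) (v : V) : Matched M v := by
  have hXY : ↑X ⊆ M.verts ∨ ↑Y ⊆ M.verts := by
    by_contra! hfree
    obtain ⟨a, ha, haM⟩ := Set.not_subset.1 hfree.1
    obtain ⟨b, hb, hbM⟩ := Set.not_subset.1 hfree.2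
    exact (hM.matched_or_matched (hcomplete a ha b hb)).elim
      (fun ⟨w, h⟩ => haM (M.edge_vert h)) fun ⟨w, h⟩ => hbM (M.edge_vert h)
  have hX : ↑X ⊆ M.verts := hXY.elim id (h.subset_verts_of_subset_verts hcard.le hM.1)
  have hY : ↑Y ⊆ M.verts := hXY.elim (h.symm.subset_verts_of_subset_verts hcard.ge hM.1) id
  exact (hM.1 ((h.2.1 v).elim (@hX v) (@hY v))).exists

theorem IsBipartiteWith.exists_isMaximalMatching_not_matched {V : Type*} [Finite V]
    {G : SimpleGraph V} {X Y : Finset V} (h : _root_.IsBipartiteWith G X Y) {a b : V}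
    (hreach : G.Reachable a b) (ha : a ∈ X) (hb : b ∈ Y) (hab : ¬ G.Adj a b) :
    ∃ M : G.Subgraph, IsMaximalMatching M ∧ ∃ v, ¬ Matched M v := by
  obtain ⟨a, y, x, b, hay, hyx, hxb, hab, ha, hb⟩ :=
    h.exists_adj_adj_adj_not_adj hreach.some ha hb hab
  have hax : a ≠ x := by rintro rfl; exact hab hxb
  have hM₀ : (G.subgraphOfAdj hay ⊔ G.subgraphOfAdj hxb).IsMatching := by
    refine (Subgraph.IsMatching.subgraphOfAdj hay).sup (.subgraphOfAdj hxb) ?_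
    have hab' : a ≠ b := fun h' => Finset.disjoint_left.1 h.1 ha (h' ▸ hb)
    have hyb : y ≠ b := by rintro rfl; exact hab hay
    simp [support_subgraphOfAdj, hax.symm, hab'.symm, hyx.ne', hyb.symm]
  obtain ⟨M, hM₀M, hM⟩ := Subgraph.exists_isMaximalMatching_ge hM₀
  by_cases hperfect : ∀ v, Matched M v
  · obtain ⟨M', hM', hM'matched⟩ := hM.1.exists_isMatching_exposing_ends
      (hM₀M.2 (Or.inl (subgraphOfAdj_adj_self hay)))
      (hM₀M.2 (Or.inr (subgraphOfAdj_adj_self hxb))) hyx.symm hax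
    have hfree : ∀ v, ¬ Matched M' v → v = a ∨ v = b := by
      intro v hv
      by_contra! hne
      exact hv ((hM'matched v).2 ⟨hperfect v, hne⟩)
    refine ⟨M', ⟨hM', fun u v huv => ?_⟩, a, fun ha' => ((hM'matched a).1 ha').2.1 rfl⟩
    by_contra! huv'
    rcases hfree u huv'.1 with rfl | rfl <;> rcases hfree v huv'.2 with rfl | rfl
    exacts [huv.ne rfl, hab huv, hab huv.symm, huv.ne rfl]
  · exact ⟨M, hM, not_forall.1 hperfect⟩

theorem stmt_7_general {V : Type*} [Fintype V] (G : SimpleGraph V)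
    (X Y : Finset V) (n : ℕ)
    (hBip : _root_.IsBipartiteWith G X Y) (hconn : G.Connected)
    (hXcard : X.card = n) (hYcard : Y.card = n) :
    (∀ rank : V → V → ℕ, IsPrefInstance G rank →
        ∀ M : G.Subgraph, IsStableMatching rank M → ∀ v : V, Matched M v) ↔
      ∀ a ∈ X, ∀ b ∈ Y, G.Adj a b := by
  constructor
  · intro hperfect
    by_contra! hincomplete
    obtain ⟨a, ha, b, hb, hab⟩ := hincomplete
    obtain ⟨M, hM, v, hv⟩ := hBip.exists_isMaximalMatching_not_matched (hconn a b) ha hb hab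
    obtain ⟨rank, hrank, hstable⟩ := hM.exists_isStableMatching
    exact hv (hperfect rank hrank M hstable v)
  · intro hcomplete rank _ M hM
    exact hBip.matched_of_isStableMatching (hXcard.trans hYcard.symm) hcomplete hM

theorem stmt_7 {V : Type*} [Fintype V] [DecidableEq V] (G : SimpleGraph V)
    [DecidableRel G.Adj] (X Y : Finset V) (n : ℕ) (hn : 1 ≤ n)
    (hBip : _root_.IsBipartiteWith G X Y) (hconn : G.Connected)
    (hXcard : X.card = n) (hYcard : Y.card = n) :
    (∀ rank : V → V → ℕ, IsPrefInstance G rank →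
        ∀ M : G.Subgraph, IsStableMatching rank M → ∀ v : V, Matched M v) ↔
      ∀ a ∈ X, ∀ b ∈ Y, G.Adj a b :=
  stmt_7_general G X Y n hBip hconn hXcard hYcard
end

section
/- Let X = A₁ ∪ … ∪ Aₙ (possibly overlapping classes, with Aᵢ \ ⋃_{j≠i} Aⱼ nonempty for each i) and let Y be partitioned into disjoint sets B₁, …, Bₙ. In the compatibility-wise complete bipartite graph where x ∈ X is adjacent to y ∈ Bᵢ iff x ∈ Aᵢ, every stable matching is X-saturating for all preference instances if and only if |Bᵢ| ≥ |Aᵢ| for all 1 ≤ i ≤ n. -/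
open SimpleGraph Finset

/-!
If `x ∈ Aᵢ` is unmatched in a stable matching, every `y ∈ Bᵢ` is matched (otherwise `xy` blocks)
to a partner in `Aᵢ \ {x}`, and partners are distinct, so `|Bᵢ| < |Aᵢ|`.

Conversely, if `|Bᵢ| < |Aᵢ|`, take `x` belonging to `Aᵢ` only, match `Bᵢ` into `Aᵢ \ {x}` and
extend this to a maximal matching of `G - x`. When every vertex ranks its partner first, a blocking
edge must join two unmatched vertices: by maximality it would contain `x`, but all neighbours of
`x` lie in `Bᵢ` and are matched. So this matching is stable and leaves `x` unmatched.
-/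

section

variable {V : Type*} {G : SimpleGraph V}

namespace SimpleGraph.Subgraph

lemma IsMatching.card_le_card_of_forall_exists_adj {M : G.Subgraph} (hM : M.IsMatching)
    {s t : Finset V} (h : ∀ y ∈ s, ∃ w ∈ t, M.Adj y w) : #s ≤ #t := by
  choose! f hft hadj using h
  exact card_le_card_of_injOn f hft fun y₁ hy₁ y₂ hy₂ hf =>
    hM.eq_of_adj_right (hadj y₁ hy₁) (hf ▸ hadj y₂ hy₂)

lemma exists_isMatching_le_of_disjoint [Finite V] {M₀ : G.Subgraph} (hM₀ : M₀.IsMatching)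
    {T : Set V} (hT : Disjoint M₀.support T) :
    ∃ M : G.Subgraph, M.IsMatching ∧ M₀ ≤ M ∧ Disjoint M.support T ∧
      ∀ u v, G.Adj u v → u ∉ T → v ∉ T → u ∈ M.support ∨ v ∈ M.support := by
  obtain ⟨M, hM₀M, hmax⟩ :=
    Finite.exists_le_maximal (p := fun M : G.Subgraph => M.IsMatching ∧ Disjoint M.support T)
      ⟨hM₀, hT⟩
  refine ⟨M, hmax.prop.1, hM₀M, hmax.prop.2, fun u v huv hu hv => ?_⟩
  by_contra! huv_free
  have hsupp : (M ⊔ G.subgraphOfAdj huv).support = M.support ∪ {u, v} := by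
    ext w
    rw [Set.mem_union, ← support_subgraphOfAdj huv]
    simp only [mem_support, sup_adj, exists_or]
  have hmatch : (M ⊔ G.subgraphOfAdj huv).IsMatching :=
    hmax.prop.1.sup (.subgraphOfAdj huv) (by simpa using huv_free)
  have hdisj : Disjoint (M ⊔ G.subgraphOfAdj huv).support T := by
    rw [hsupp, Set.disjoint_union_left]
    exact ⟨hmax.prop.2, by simpa [Set.disjoint_insert_left] using ⟨hu, hv⟩⟩
  have hle : M ⊔ G.subgraphOfAdj huv ≤ M := hmax.2 ⟨hmatch, hdisj⟩ le_sup_left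
  exact huv_free.1 ⟨v, hle.2 (sup_adj.mpr (.inr (by simp)))⟩

lemma IsMatching.exists_isPrefInstance_rank_eq_zero [Fintype V] {M : G.Subgraph}
    (hM : M.IsMatching) :
    ∃ rank : V → V → ℕ, IsPrefInstance G rank ∧ ∀ v w, M.Adj v w → rank v w = 0 := by
  classical
  refine ⟨fun v w => if M.Adj v w then 0 else Fintype.equivFin V w + 1, ?_, fun v w h => if_pos h⟩
  intro v w₁ _ w₂ _ h
  by_cases h₁ : M.Adj v w₁ <;> by_cases h₂ : M.Adj v w₂ <;>
    simp only [h₁, h₂, if_true, if_false] at h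
  · exact hM.eq_of_adj_left h₁ h₂
  · omega
  · omega
  · exact (Fintype.equivFin V).injective (Fin.ext (by omega))

end SimpleGraph.Subgraph

open SimpleGraph.Subgraph

lemma IsStableMatching.matched_of_adj {rank : V → V → ℕ} {M : G.Subgraph}
    (hM : IsStableMatching rank M) {x y : V} (hxy : G.Adj x y) (hx : ¬ Matched M x) :
    Matched M y := by
  by_contra hy
  exact hM.2 ⟨x, y, hxy, fun h => hx ⟨y, h⟩, fun w hw => (hx ⟨w, hw⟩).elim,
    fun w hw => (hy ⟨w, hw⟩).elim⟩

lemma IsStableMatching.card_lt_of_not_matched {rank : V → V → ℕ} {M : G.Subgraph}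
    (hM : IsStableMatching rank M) {x : V} (hx : ¬ Matched M x) {s t : Finset V}
    (hs : ∀ y ∈ s, G.Adj x y) (ht : ∀ y ∈ s, ∀ w, G.Adj y w → w ∈ t) (hxt : x ∈ t) :
    #s < #t := by
  classical
  have hsub : ∀ y ∈ s, ∃ w ∈ t.erase x, M.Adj y w := by
    intro y hy
    obtain ⟨w, hw⟩ := hM.matched_of_adj (hs y hy) hx
    exact ⟨w, mem_erase.mpr ⟨fun h => hx ⟨y, (h ▸ hw).symm⟩, ht y hy w (M.adj_sub hw)⟩, hw⟩
  have hle := hM.1.card_le_card_of_forall_exists_adj hsub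
  rw [card_erase_of_mem hxt] at hle
  have ht_pos := card_pos.mpr ⟨x, hxt⟩
  omega

lemma isStableMatching_of_rank_eq_zero {rank : V → V → ℕ} {M : G.Subgraph} (hM : M.IsMatching)
    (hrank : ∀ v w, M.Adj v w → rank v w = 0)
    (hmax : ∀ u v, G.Adj u v → Matched M u ∨ Matched M v) : IsStableMatching rank M := by
  refine ⟨hM, ?_⟩
  rintro ⟨x, y, hxy, -, hx, hy⟩
  rcases hmax x y hxy with ⟨w, hw⟩ | ⟨w, hw⟩
  · exact Nat.not_lt_zero _ (hrank x w hw ▸ hx w hw)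
  · exact Nat.not_lt_zero _ (hrank y w hw ▸ hy w hw)

lemma exists_isStableMatching_not_matched [Fintype V] {x : V} {s t : Finset V}
    (hNx : ∀ y, G.Adj x y → y ∈ s) (hst : Disjoint s t) (hxs : x ∉ s) (hxt : x ∉ t)
    (hcard : #s ≤ #t) (hadj : ∀ y ∈ s, ∀ w ∈ t, G.Adj y w) :
    ∃ rank, IsPrefInstance G rank ∧ ∃ M : G.Subgraph, IsStableMatching rank M ∧ ¬ Matched M x := by
  obtain ⟨t', ht't, ht'card⟩ := exists_subset_card_eq hcard
  let e := equivOfCardEq ht'card.symm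
  obtain ⟨M₀, hM₀verts, hM₀⟩ := IsMatching.exists_of_disjoint_sets_of_equiv (G := G)
    (s := ↑s) (t := ↑t') (disjoint_coe.mpr (hst.mono_right ht't)) e
    fun y => hadj y y.2 (e y) (ht't (e y).2)
  have hsupp₀ : M₀.support = ↑s ∪ ↑t' := by rw [hM₀.support_eq_verts, hM₀verts]
  obtain ⟨M, hM, hM₀M, hMx, hmax⟩ := exists_isMatching_le_of_disjoint hM₀ (T := {x}) (by
    rw [hsupp₀, Set.disjoint_singleton_right, Set.mem_union, mem_coe, mem_coe]
    exact fun h => h.elim hxs fun h => hxt (ht't h))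
  have hsM : ∀ y ∈ s, Matched M y := fun y hy =>
    Subgraph.support_mono hM₀M (hsupp₀ ▸ Set.mem_union_left _ (mem_coe.mpr hy))
  obtain ⟨rank, hrank, hrank0⟩ := hM.exists_isPrefInstance_rank_eq_zero
  refine ⟨rank, hrank, M, isStableMatching_of_rank_eq_zero hM hrank0 fun u v huv => ?_,
    fun h => Set.disjoint_singleton_right.mp hMx h⟩
  by_cases hu : u = x
  · exact .inr (hsM v (hNx v (hu ▸ huv)))
  by_cases hv : v = x
  · exact .inl (hsM u (hNx u (hv ▸ huv.symm)))
  exact hmax u v huv hu hv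

variable {n : ℕ} {A B : Fin n → Finset V}

lemma mem_A_of_mem_B_of_adj (hAB : ∀ i j, Disjoint (A i) (B j))
    (hBdisj : ∀ i j : Fin n, i ≠ j → Disjoint (B i) (B j))
    (hAdj : ∀ a b : V, G.Adj a b ↔ ∃ i : Fin n, (a ∈ A i ∧ b ∈ B i) ∨ (b ∈ A i ∧ a ∈ B i))
    {i : Fin n} {y w : V} (hy : y ∈ B i) (hyw : G.Adj y w) : w ∈ A i := by
  obtain ⟨j, ⟨hyA, -⟩ | ⟨hwA, hyB⟩⟩ := (hAdj y w).mp hyw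
  · exact absurd hy (disjoint_left.mp (hAB j i) hyA)
  · obtain rfl : j = i := by_contra fun hji => disjoint_left.mp (hBdisj j i hji) hyB hy
    exact hwA

lemma mem_B_of_mem_A_of_adj (hAB : ∀ i j, Disjoint (A i) (B j))
    (hAdj : ∀ a b : V, G.Adj a b ↔ ∃ i : Fin n, (a ∈ A i ∧ b ∈ B i) ∨ (b ∈ A i ∧ a ∈ B i))
    {i : Fin n} {x z : V} (hx : x ∈ A i) (hexcl : ∀ j, j ≠ i → x ∉ A j) (hxz : G.Adj x z) :
    z ∈ B i := by
  obtain ⟨j, ⟨hxA, hzB⟩ | ⟨-, hxB⟩⟩ := (hAdj x z).mp hxz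
  · obtain rfl : j = i := by_contra fun hji => hexcl j hji hxA
    exact hzB
  · exact absurd hxB (disjoint_left.mp (hAB i j) hx)

end

theorem stmt_9_general {V : Type*} [Fintype V] [DecidableEq V] (G : SimpleGraph V)
    (X Y : Finset V) (hdisj : Disjoint X Y)
    (n : ℕ) (A B : Fin n → Finset V)
    (hX : X = Finset.univ.biUnion A)
    (hY : Y = Finset.univ.biUnion B)
    (hBdisj : ∀ i j : Fin n, i ≠ j → Disjoint (B i) (B j))
    (hexcl : ∀ i : Fin n, ∃ x ∈ A i, ∀ j : Fin n, j ≠ i → x ∉ A j)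
    (hAdj : ∀ a b : V, G.Adj a b ↔ ∃ i : Fin n,
      (a ∈ A i ∧ b ∈ B i) ∨ (b ∈ A i ∧ a ∈ B i)) :
    (∀ rank : V → V → ℕ, IsPrefInstance G rank →
        ∀ M : G.Subgraph, IsStableMatching rank M → ∀ x ∈ X, Matched M x) ↔
      ∀ i : Fin n, (A i).card ≤ (B i).card := by
  have hAB : ∀ i j, Disjoint (A i) (B j) := fun i j =>
    hdisj.mono (hX ▸ subset_biUnion_of_mem A (mem_univ i))
      (hY ▸ subset_biUnion_of_mem B (mem_univ j))
  constructor
  · intro hsat i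
    by_contra! hlt
    obtain ⟨x, hxA, hxexcl⟩ := hexcl i
    obtain ⟨rank, hrank, M, hM, hx⟩ := exists_isStableMatching_not_matched (t := (A i).erase x)
      (fun _ => mem_B_of_mem_A_of_adj hAB hAdj hxA hxexcl)
      ((hAB i i).symm.mono_right (erase_subset x _)) (disjoint_left.mp (hAB i i) hxA)
      (notMem_erase x _) (by rw [card_erase_of_mem hxA]; omega)
      fun y hy w hw => (hAdj y w).mpr ⟨i, .inr ⟨mem_of_mem_erase hw, hy⟩⟩
    exact hx (hsat rank hrank M hM x (hX ▸ mem_biUnion.mpr ⟨i, mem_univ i, hxA⟩))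
  · rintro hcard rank - M hM x hxX
    obtain ⟨i, -, hxA⟩ := mem_biUnion.mp (hX ▸ hxX)
    by_contra hx
    refine (hM.card_lt_of_not_matched hx (s := B i) ?_ ?_ hxA).not_ge (hcard i)
    · exact fun y hy => (hAdj x y).mpr ⟨i, .inl ⟨hxA, hy⟩⟩
    · exact fun y hy _ => mem_A_of_mem_B_of_adj hAB hBdisj hAdj hy

theorem stmt_9 {V : Type*} [Fintype V] [DecidableEq V] (G : SimpleGraph V)
    [DecidableRel G.Adj] (X Y : Finset V) (hdisj : Disjoint X Y)
    (n : ℕ) (A B : Fin n → Finset V)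
    (hX : X = Finset.univ.biUnion A)
    (hY : Y = Finset.univ.biUnion B)
    (hBdisj : ∀ i j : Fin n, i ≠ j → Disjoint (B i) (B j))
    (hexcl : ∀ i : Fin n, ∃ x ∈ A i, ∀ j : Fin n, j ≠ i → x ∉ A j)
    (hAdj : ∀ a b : V, G.Adj a b ↔ ∃ i : Fin n,
      (a ∈ A i ∧ b ∈ B i) ∨ (b ∈ A i ∧ a ∈ B i)) :
    (∀ rank : V → V → ℕ, IsPrefInstance G rank →
        ∀ M : G.Subgraph, IsStableMatching rank M → ∀ x ∈ X, Matched M x) ↔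
      ∀ i : Fin n, (A i).card ≤ (B i).card :=
  stmt_9_general G X Y hdisj n A B hX hY hBdisj hexcl hAdj
end
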